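/- arXiv:0905.0412 — 3 statements merged into one kernel-verified Lean document; each statement's English description precedes it below -/
import Mathlib

section
/- For any positive integer i and indeterminates a, q, t, the following terminating sum identity holds: ∑_{k=1}^{i} q^{i-k}(1-a q^{2k}) · ((q^{i-k+1};q)_k/(q^{i-k} t;q)_k) · ((a q^i t;q)_k/(a q^{i+1};q)_k) = ((1-q^i)/(1-t)) · (1-a q^i t), where (x;q)_k = ∏_{j=0}^{k-1}(1-x q^j). -/
/-!
The sum telescopes. Let `R_k` be `(1 - q^{i-k})(1 - a q^{i+k} t)` times the hypergeometric factor
`(q^{i-k+1};q)_k (a q^i t;q)_k / ((q^{i-k} t;q)_k (a q^{i+1};q)_k)` of the `k`-th summand. Both the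
`k`-th summand and `R_k` are `R_{k-1}` times simple ratios, and the polynomial identity
`(1 - x t)(1 - x y) - (1 - x)(1 - x y t) = (1 - t) x (1 - y)` (with `x = q^{i-k}`, `y = a q^{2k}`)
shows that `(1 - t)` times the `k`-th summand is `R_{k-1} - R_k`. Hence `(1 - t)` times the sum is
`R_0 - R_i = (1 - q^i)(1 - a q^i t)`.
-/

open Finset

/-- The q-Pochhammer symbol `(x;q)_k = ∏_{j=0}^{k-1} (1 - x q^j)`. -/
def qPoch {F : Type*} [Field F] (x q : F) (k : ℕ) : F :=
  ∏ j ∈ Finset.range k, (1 - x * q ^ j)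

lemma Finset.sum_Icc_one_eq_sum_range {M : Type*} [AddCommMonoid M] (f : ℕ → M) (n : ℕ) :
    ∑ k ∈ Icc 1 n, f k = ∑ k ∈ range n, f (k + 1) := by
  rw [range_eq_Ico, sum_Ico_add' f 0 n 1, zero_add, Ico_add_one_right_eq_Icc]

section

variable {F : Type*} [Field F]

lemma qPoch_zero (x q : F) : qPoch x q 0 = 1 := prod_range_zero _

lemma qPoch_succ (x q : F) (k : ℕ) : qPoch x q (k + 1) = qPoch x q k * (1 - x * q ^ k) :=
  prod_range_succ _ _

lemma qPoch_succ' (x q : F) (k : ℕ) : qPoch x q (k + 1) = (1 - x) * qPoch (x * q) q k := by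
  simp only [qPoch, prod_range_succ', pow_zero, mul_one, pow_succ, mul_assoc, mul_comm]

lemma qPoch_pow_succ' (q : F) (m k : ℕ) :
    qPoch (q ^ m) q (k + 1) = (1 - q ^ m) * qPoch (q ^ (m + 1)) q k := by
  rw [qPoch_succ', ← pow_succ]

lemma qPoch_pow_mul_succ' (q t : F) (m k : ℕ) :
    qPoch (q ^ m * t) q (k + 1) = (1 - q ^ m * t) * qPoch (q ^ (m + 1) * t) q k := by
  rw [qPoch_succ', mul_right_comm, ← pow_succ]

lemma qPoch_ne_zero_iff {x q : F} {k : ℕ} :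
    qPoch x q k ≠ 0 ↔ ∀ j < k, 1 - x * q ^ j ≠ 0 := by
  simp [qPoch, prod_ne_zero_iff]

def sixPhiFiveTerm (a q t : F) (i k : ℕ) : F :=
  q ^ (i - k) * (1 - a * q ^ (2 * k)) *
    (qPoch (q ^ (i - k + 1)) q k / qPoch (q ^ (i - k) * t) q k) *
    (qPoch (a * q ^ i * t) q k / qPoch (a * q ^ (i + 1)) q k)

def sixPhiFiveRemainder (a q t : F) (i k : ℕ) : F :=
  (1 - q ^ (i - k)) * (1 - a * q ^ (i + k) * t) *
    (qPoch (q ^ (i - k + 1)) q k / qPoch (q ^ (i - k) * t) q k) *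
    (qPoch (a * q ^ i * t) q k / qPoch (a * q ^ (i + 1)) q k)

lemma sixPhiFiveRemainder_zero (a q t : F) (i : ℕ) :
    sixPhiFiveRemainder a q t i 0 = (1 - q ^ i) * (1 - a * q ^ i * t) := by
  simp [sixPhiFiveRemainder, qPoch_zero]

lemma sixPhiFiveRemainder_self (a q t : F) (i : ℕ) : sixPhiFiveRemainder a q t i i = 0 := by
  simp [sixPhiFiveRemainder]

section Succ

variable (a q t : F) (n k : ℕ)

lemma sixPhiFiveTerm_succ : sixPhiFiveTerm a q t (n + k + 1) (k + 1) =
    sixPhiFiveRemainder a q t (n + k + 1) k * (q ^ n * (1 - a * q ^ (2 * (k + 1)))) /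
      ((1 - q ^ n * t) * (1 - a * q ^ (n + k + 1 + 1) * q ^ k)) := by
  simp only [sixPhiFiveTerm, sixPhiFiveRemainder, show n + k + 1 - (k + 1) = n by omega,
    show n + k + 1 - k = n + 1 by omega]
  rw [qPoch_pow_succ', qPoch_pow_mul_succ', qPoch_succ, qPoch_succ]
  simp only [div_eq_mul_inv, mul_inv]
  ring

lemma sixPhiFiveRemainder_succ : sixPhiFiveRemainder a q t (n + k + 1) (k + 1) =
    sixPhiFiveRemainder a q t (n + k + 1) k *
        ((1 - q ^ n) * (1 - a * q ^ (n + k + 1 + (k + 1)) * t)) /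
      ((1 - q ^ n * t) * (1 - a * q ^ (n + k + 1 + 1) * q ^ k)) := by
  simp only [sixPhiFiveRemainder, show n + k + 1 - (k + 1) = n by omega,
    show n + k + 1 - k = n + 1 by omega]
  rw [qPoch_pow_succ', qPoch_pow_mul_succ', qPoch_succ, qPoch_succ]
  simp only [div_eq_mul_inv, mul_inv]
  ring

end Succ

lemma one_sub_mul_sixPhiFiveTerm_succ (a q t : F) {i k : ℕ} (hk : k < i)
    (h₁ : 1 - q ^ (i - (k + 1)) * t ≠ 0) (h₂ : 1 - a * q ^ (i + 1) * q ^ k ≠ 0) :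
    (1 - t) * sixPhiFiveTerm a q t i (k + 1) =
      sixPhiFiveRemainder a q t i k - sixPhiFiveRemainder a q t i (k + 1) := by
  obtain ⟨n, rfl⟩ : ∃ n, i = n + k + 1 := ⟨i - (k + 1), by omega⟩
  rw [show n + k + 1 - (k + 1) = n by omega] at h₁
  rw [sixPhiFiveTerm_succ, sixPhiFiveRemainder_succ]
  set C := sixPhiFiveRemainder a q t (n + k + 1) k
  set D := (1 - q ^ n * t) * (1 - a * q ^ (n + k + 1 + 1) * q ^ k)
  set Y := (1 - q ^ n) * (1 - a * q ^ (n + k + 1 + (k + 1)) * t)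
  have key : D - Y = (1 - t) * (q ^ n * (1 - a * q ^ (2 * (k + 1)))) := by ring
  calc (1 - t) * (C * (q ^ n * (1 - a * q ^ (2 * (k + 1)))) / D)
      = C * (D - Y) / D := by rw [key]; ring
    _ = C - C * Y / D := by rw [mul_sub, sub_div, mul_div_cancel_right₀ C (mul_ne_zero h₁ h₂)]

end

theorem stmt0_general {F : Type*} [Field F] (a q t : F) (i : ℕ)
    (ht : 1 - t ≠ 0)
    (hden1 : ∀ k ∈ Finset.Icc 1 i, qPoch (q ^ (i - k) * t) q k ≠ 0)
    (hden2 : ∀ k ∈ Finset.Icc 1 i, qPoch (a * q ^ (i + 1)) q k ≠ 0) :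
    ∑ k ∈ Finset.Icc 1 i,
      q ^ (i - k) * (1 - a * q ^ (2 * k)) *
        (qPoch (q ^ (i - k + 1)) q k / qPoch (q ^ (i - k) * t) q k) *
        (qPoch (a * q ^ i * t) q k / qPoch (a * q ^ (i + 1)) q k)
      = (1 - q ^ i) / (1 - t) * (1 - a * q ^ i * t) := by
  set R := sixPhiFiveRemainder a q t i
  have htelescope (k : ℕ) (hk : k < i) :
      sixPhiFiveTerm a q t i (k + 1) = (R k - R (k + 1)) / (1 - t) := by
    have hk' : k + 1 ∈ Icc 1 i := mem_Icc.2 ⟨by omega, hk⟩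
    rw [eq_div_iff ht, mul_comm]
    refine one_sub_mul_sixPhiFiveTerm_succ a q t hk ?_
      (qPoch_ne_zero_iff.1 (hden2 _ hk') k (by omega))
    simpa using qPoch_ne_zero_iff.1 (hden1 _ hk') 0 (by omega)
  calc _ = ∑ k ∈ range i, sixPhiFiveTerm a q t i (k + 1) := sum_Icc_one_eq_sum_range _ i
    _ = ∑ k ∈ range i, (R k - R (k + 1)) / (1 - t) :=
      sum_congr rfl fun k hk => htelescope k (mem_range.1 hk)
    _ = (R 0 - R i) / (1 - t) := by rw [← sum_div, sum_range_sub']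
    _ = _ := by
      rw [show R 0 = _ from sixPhiFiveRemainder_zero a q t i,
        show R i = 0 from sixPhiFiveRemainder_self a q t i, sub_zero, div_mul_eq_mul_div]

/-- Terminating very-well-poised ₆φ₅ summation, in the form
`∑_{k=1}^i q^{i-k}(1-aq^{2k}) ((q^{i-k+1};q)_k/(q^{i-k}t;q)_k) ((aq^i t;q)_k/(aq^{i+1};q)_k)
  = ((1-q^i)/(1-t)) (1-aq^i t)`. -/
theorem stmt0 {F : Type*} [Field F] (a q t : F) (i : ℕ) (hi : 0 < i)
    (ht : 1 - t ≠ 0)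
    (hden1 : ∀ k ∈ Finset.Icc 1 i, qPoch (q ^ (i - k) * t) q k ≠ 0)
    (hden2 : ∀ k ∈ Finset.Icc 1 i, qPoch (a * q ^ (i + 1)) q k ≠ 0) :
    ∑ k ∈ Finset.Icc 1 i,
      q ^ (i - k) * (1 - a * q ^ (2 * k)) *
        (qPoch (q ^ (i - k + 1)) q k / qPoch (q ^ (i - k) * t) q k) *
        (qPoch (a * q ^ i * t) q k / qPoch (a * q ^ (i + 1)) q k)
      = (1 - q ^ i) / (1 - t) * (1 - a * q ^ i * t) :=
  stmt0_general a q t i ht hden1 hden2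
end

section
/- Let x_1,…,x_n be indeterminates. Then ∑_{σ ∈ {-1,+1}^n} ∏_{i=1}^n (1 - t x_i^{2σ_i})/(1 - x_i^{2σ_i}) · ∏_{1 ≤ i < j ≤ n} (1 - t x_i^{σ_i} x_j^{σ_j})/(1 - x_i^{σ_i} x_j^{σ_j}) = ∏_{i=1}^{n}(t^i + 1). -/
/-!
Split off the variable `X = x₀^{±1}` and let `y = x^σ` be the remaining signed variables. The
summand is `W(y) K_y(X)` (`weight`, `kernel`), where `W(y)` is the summand for `y` alone and
`K_y(X) = (1 - tX²)/(1 - X²) ∏ₖ (1 - t yₖ X)/(1 - yₖ X)`. In the partial fraction expansion of `K_y`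
in `X` (simple poles at `±1` and at the `yₖ⁻¹`, with coefficients `δₖ(y)`, `residue`), the poles at
`±1` contribute a constant to `K_y(X) + K_y(X⁻¹)`, which `K_y(0) = 1` determines:
`K_y(X) + K_y(X⁻¹) = t^(n+1) + 1 + ∑ₖ δₖ(y) G(yₖ, X)` with `G(u, X) = 1/(1 - uX) + 1/(1 - u/X) - 1`
(`poleSum`). Now `G(u⁻¹, X) = -G(u, X)`, while `W(y) δₖ(y) = (1 - t) W(z) K_z(yₖ) K_z(yₖ⁻¹)`, where
`z` are the variables other than `yₖ` (the summand is symmetric, so `yₖ` splits off like `X`), is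
unchanged by `yₖ ↦ yₖ⁻¹`. Hence the correction terms cancel in the sum over the signs of `y`,
leaving `t^(n+1) + 1` times the sum for the `n` variables `y`.
-/

open Finset

/-- `x_i^{σ_i}`: the variable `x i` raised to the sign `σ i` (`true` = `+1`). -/
def sgnVar {F : Type*} [Field F] {n : ℕ} (x : Fin n → F) (σ : Fin n → Bool) (i : Fin n) : F :=
  if σ i then x i else (x i)⁻¹

namespace Finset

theorem prod_Ioi_eq_prod_sym2 {ι M : Type*} [Fintype ι] [LinearOrder ι] [LocallyFiniteOrderTop ι]
    [CommMonoid M] (g : {g : ι → ι → M // ∀ a b, g a b = g b a}) :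
    ∏ k, ∏ l ∈ Ioi k, g.1 k l = ∏ z : Sym2 ι with ¬ z.IsDiag, Sym2.lift g z := by
  have h := sum_sym2_filter_not_isDiag (M := Additive M) univ (fun z => .ofMul (Sym2.lift g z))
  apply_fun Additive.toMul at h
  simp only [toMul_sum, toMul_ofMul, Sym2.lift_mk, sym2_univ] at h
  rw [h, prod_finset_product' _ univ (fun k => Ioi k)]
  simp [and_iff_right_of_imp ne_of_lt]

theorem prod_Ioi_comp_perm {ι M : Type*} [Fintype ι] [LinearOrder ι] [LocallyFiniteOrderTop ι]
    [CommMonoid M] (g : ι → ι → M) (hg : ∀ a b, g a b = g b a) (e : Equiv.Perm ι) :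
    ∏ k, ∏ l ∈ Ioi k, g (e k) (e l) = ∏ k, ∏ l ∈ Ioi k, g k l := by
  rw [prod_Ioi_eq_prod_sym2 ⟨fun a b => g (e a) (e b), fun a b => hg _ _⟩,
    prod_Ioi_eq_prod_sym2 ⟨g, hg⟩, prod_filter, prod_filter]
  refine Fintype.prod_bijective (Sym2.map e) (Sym2.map.injective e.injective).bijective_of_finite
    _ _ fun z => ?_
  simp only [Sym2.isDiag_map e.injective, Sym2.lift_map_apply]

end Finset

namespace MacdonaldCn

variable {F : Type*} [Field F]

structure IsGeneric {ι : Type*} (x : ι → F) : Prop where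
  ne_zero : ∀ i, x i ≠ 0
  sq_ne_one : ∀ i, x i ^ 2 ≠ 1
  mul_ne_one : ∀ ⦃i j⦄, i ≠ j → x i * x j ≠ 1
  injective : Function.Injective x

theorem IsGeneric.comp_injective {ι κ : Type*} {x : ι → F} (hx : IsGeneric x) {f : κ → ι}
    (hf : f.Injective) : IsGeneric (x ∘ f) where
  ne_zero k := hx.ne_zero (f k)
  sq_ne_one k := hx.sq_ne_one (f k)
  mul_ne_one _ _ hkl := hx.mul_ne_one (hf.ne hkl)
  injective := hx.injective.comp hf

theorem sgnVar_eq_or {n : ℕ} (x : Fin n → F) (σ : Fin n → Bool) (i : Fin n) :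
    sgnVar x σ i = x i ∨ sgnVar x σ i = (x i)⁻¹ := by
  unfold sgnVar; split_ifs <;> simp

theorem isGeneric_sgnVar {n : ℕ} {x : Fin n → F} (hx : IsGeneric x) (σ : Fin n → Bool) :
    IsGeneric (sgnVar x σ) := by
  have hmul {i j : Fin n} (hij : i ≠ j) {a b : F} (ha : a = x i ∨ a = (x i)⁻¹)
      (hb : b = x j ∨ b = (x j)⁻¹) : a * b ≠ 1 := by
    rcases ha with rfl | rfl <;> rcases hb with rfl | rfl
    · exact hx.mul_ne_one hij
    · rw [Ne, mul_inv_eq_one₀ (hx.ne_zero j)]; exact hx.injective.ne hij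
    · rw [Ne, inv_mul_eq_one₀ (hx.ne_zero i)]; exact hx.injective.ne hij
    · rw [← mul_inv, Ne, inv_eq_one]; exact hx.mul_ne_one hij
  have hne_zero i : sgnVar x σ i ≠ 0 := by
    rcases sgnVar_eq_or x σ i with h | h <;> simp [h, hx.ne_zero i]
  refine ⟨hne_zero, fun i => ?_, fun i j hij => hmul hij (sgnVar_eq_or x σ i) (sgnVar_eq_or x σ j),
    fun i j hij => ?_⟩
  · rcases sgnVar_eq_or x σ i with h | h <;> simp [h, inv_pow, hx.sq_ne_one i]
  · by_contra hne
    refine hmul hne (sgnVar_eq_or x σ i) (b := (sgnVar x σ j)⁻¹) ?_ ?_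
    · rcases sgnVar_eq_or x σ j with h | h <;> simp [h]
    · rw [hij, mul_inv_cancel₀ (hne_zero j)]

theorem sgnVar_insertNth {n : ℕ} (x : Fin (n + 1) → F) (i : Fin (n + 1)) (b : Bool)
    (τ : Fin n → Bool) :
    sgnVar x (i.insertNth b τ)
      = i.insertNth (if b then x i else (x i)⁻¹) (sgnVar (i.removeNth x) τ) := by
  ext j
  cases j using i.succAboveCases <;> simp [sgnVar, Fin.removeNth]

theorem sum_sgnVar_insertNth {M : Type*} [AddCommMonoid M] {n : ℕ} (x : Fin (n + 1) → F)
    (i : Fin (n + 1)) (f : (Fin (n + 1) → F) → M) :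
    ∑ σ, f (sgnVar x σ) = ∑ τ, (f (i.insertNth (x i) (sgnVar (i.removeNth x) τ))
      + f (i.insertNth (x i)⁻¹ (sgnVar (i.removeNth x) τ))) := by
  rw [← (Fin.insertNthEquiv (fun _ => Bool) i).sum_comp, Fintype.sum_prod_type, sum_comm]
  simp [Fin.insertNthEquiv, sgnVar_insertNth]

theorem sum_sgnVar_cons {M : Type*} [AddCommMonoid M] {n : ℕ} (X : F) (y : Fin n → F)
    (f : (Fin (n + 1) → F) → M) :
    ∑ σ, f (sgnVar (Fin.cons X y) σ)
      = ∑ τ, (f (Fin.cons X (sgnVar y τ)) + f (Fin.cons X⁻¹ (sgnVar y τ))) := by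
  simpa using sum_sgnVar_insertNth (Fin.cons X y) 0 f

theorem isGeneric_cons_sgnVar {n : ℕ} {X : F} {y : Fin n → F}
    (h : IsGeneric (Fin.cons X y : Fin (n + 1) → F)) (τ : Fin n → Bool) :
    IsGeneric (Fin.cons X (sgnVar y τ) : Fin (n + 1) → F) := by
  have h_eq : sgnVar (Fin.cons X y) (Fin.cons true τ) = Fin.cons X (sgnVar y τ) := by
    simpa using sgnVar_insertNth (Fin.cons X y) 0 true τ
  exact h_eq ▸ isGeneric_sgnVar h (Fin.cons true τ)

def pairFactor (t u v : F) : F := (1 - t * u * v) / (1 - u * v)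

theorem pairFactor_comm (t u v : F) : pairFactor t u v = pairFactor t v u := by
  simp only [pairFactor, mul_comm u v, mul_right_comm t u v, mul_assoc]

def weight (t : F) {n : ℕ} (y : Fin n → F) : F :=
  (∏ i, pairFactor t (y i) (y i)) * ∏ i, ∏ j ∈ Ioi i, pairFactor t (y i) (y j)

def kernel (t : F) {ι : Type*} (y : ι → F) (s : Finset ι) (X : F) : F :=
  pairFactor t X X * ∏ k ∈ s, pairFactor t (y k) X

def residue (t : F) {ι : Type*} [DecidableEq ι] (y : ι → F) (s : Finset ι) (i : ι) : F :=
  (1 - t) * kernel t y (s.erase i) (y i)⁻¹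

theorem weight_comp_perm (t : F) {n : ℕ} (y : Fin n → F) (e : Equiv.Perm (Fin n)) :
    weight t (y ∘ e) = weight t y := by
  simp only [weight, Function.comp_apply]
  rw [Equiv.prod_comp e (fun i => pairFactor t (y i) (y i))]
  congr 1
  exact prod_Ioi_comp_perm (fun a b => pairFactor t (y a) (y b)) (fun a b => pairFactor_comm ..) e

theorem weight_cons (t X : F) {n : ℕ} (y : Fin n → F) :
    weight t (Fin.cons X y : Fin (n + 1) → F) = weight t y * kernel t y univ X := by
  simp only [weight, kernel, Fin.prod_univ_succ, Fin.prod_Ioi_zero, Fin.prod_Ioi_succ,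
    Fin.cons_zero, Fin.cons_succ, pairFactor_comm t X]
  ring

theorem weight_insertNth (t X : F) {n : ℕ} (i : Fin (n + 1)) (y : Fin n → F) :
    weight t (i.insertNth X y) = weight t y * kernel t y univ X := by
  rw [← Fin.cons_comp_cycleRange, weight_comp_perm, weight_cons]

theorem residue_insertNth_self (t X : F) {n : ℕ} (i : Fin (n + 1)) (y : Fin n → F) :
    residue t (i.insertNth X y) univ i = (1 - t) * kernel t y univ X⁻¹ := by
  rw [residue, kernel, kernel, ← compl_singleton, ← Fin.image_succAbove_univ,
    prod_image Fin.succAbove_right_injective.injOn]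
  simp

theorem pairFactor_eq_add (t : F) {u v : F} (h : u * v ≠ 1) :
    pairFactor t u v = t + (1 - t) / (1 - u * v) := by
  have : 1 - u * v ≠ 0 := sub_ne_zero.mpr h.symm
  rw [pairFactor]
  field_simp
  ring

theorem div_mul_pairFactor (t δ : F) {β Z X : F} (hβ : β ≠ 0) (hZ : Z ≠ 0) (hβZ : β ≠ Z)
    (hβX : β * X ≠ 1) (hZX : Z * X ≠ 1) :
    δ / (1 - β * X) * pairFactor t Z X
      = δ * pairFactor t Z β⁻¹ / (1 - β * X) + (1 - t) * (δ / (1 - β * Z⁻¹)) / (1 - Z * X) := by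
  have hZX₀ : 1 - Z * X ≠ 0 := sub_ne_zero.mpr hZX.symm
  have hXZ₀ : 1 - X * Z ≠ 0 := by rwa [mul_comm]
  rw [pairFactor, pairFactor]
  field_simp
  ring

theorem exists_polar_mul_pairFactor (t a₀ a₁ : F) {Z : F} (hZ : Z ≠ 0) (hZ2 : Z ^ 2 ≠ 1) :
    ∃ b₀ b₁ : F, ∀ X, X ^ 2 ≠ 1 → Z * X ≠ 1 →
      (a₀ + a₁ * X) / (1 - X ^ 2) * pairFactor t Z X
        = (b₀ + b₁ * X) / (1 - X ^ 2)
          + (1 - t) * ((a₀ + a₁ * Z⁻¹) / (1 - Z⁻¹ ^ 2)) / (1 - Z * X) := by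
  have hZ2' : Z ^ 2 - 1 ≠ 0 := sub_ne_zero.mpr hZ2
  -- `Z * v` is the value of the polar part at `X = Z⁻¹`.
  set v := (a₀ * Z + a₁) / (Z ^ 2 - 1) with hv
  refine ⟨t * a₀ + (1 - t) * (a₀ - Z * v), t * a₁ - (1 - t) * v, fun X hX2 hZX => ?_⟩
  have hZX₀ : 1 - Z * X ≠ 0 := sub_ne_zero.mpr hZX.symm
  have hXZ₀ : 1 - X * Z ≠ 0 := by rwa [mul_comm]
  have hZ2₀ : 1 - Z⁻¹ ^ 2 ≠ 0 := by
    rw [sub_ne_zero, inv_pow, ne_comm, Ne, inv_eq_one]; exact hZ2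
  rw [pairFactor, hv]
  field_simp
  ring

theorem polar_add_polar_inv (a₀ a₁ : F) {X : F} (hX : X ≠ 0) (hX2 : X ^ 2 ≠ 1) :
    (a₀ + a₁ * X) / (1 - X ^ 2) + (a₀ + a₁ * X⁻¹) / (1 - X⁻¹ ^ 2) = a₀ := by
  field_simp
  ring

section PartialFractions

variable {ι : Type*} [DecidableEq ι] (t : F) (y : ι → F)

theorem kernel_insert {s : Finset ι} {a : ι} (ha : a ∉ s) (X : F) :
    kernel t y (insert a s) X = kernel t y s X * pairFactor t (y a) X := by
  rw [kernel, kernel, prod_insert ha]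
  ring

theorem residue_insert_self {s : Finset ι} {a : ι} (ha : a ∉ s) :
    residue t y (insert a s) a = (1 - t) * kernel t y s (y a)⁻¹ := by
  rw [residue, erase_insert ha]

theorem residue_insert_of_mem {s : Finset ι} {a i : ι} (ha : a ∉ s) (hi : i ∈ s) :
    residue t y (insert a s) i = residue t y s i * pairFactor t (y a) (y i)⁻¹ := by
  have hai : a ≠ i := fun h => ha (h ▸ hi)
  rw [residue, residue, erase_insert_of_ne hai,
    kernel_insert t y fun h => ha (mem_of_mem_erase h)]
  ring

theorem exists_kernel_eq_partialFraction (hy0 : ∀ i, y i ≠ 0) (hy2 : ∀ i, y i ^ 2 ≠ 1)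
    (hinj : y.Injective) (s : Finset ι) :
    ∃ a₀ a₁ : F, ∀ X, X ^ 2 ≠ 1 → (∀ i ∈ s, y i * X ≠ 1) →
      kernel t y s X = t ^ (#s + 1) + (a₀ + a₁ * X) / (1 - X ^ 2)
        + ∑ i ∈ s, residue t y s i / (1 - y i * X) := by
  induction s using Finset.induction_on with
  | empty =>
    refine ⟨1 - t, 0, fun X hX2 _ => ?_⟩
    have : 1 - X ^ 2 ≠ 0 := sub_ne_zero.mpr hX2.symm
    simp only [kernel, pairFactor, prod_empty, sum_empty, card_empty]
    field_simp
    ring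
  | @insert a s ha ih =>
    obtain ⟨a₀, a₁, H⟩ := ih
    obtain ⟨b₀, b₁, hpolar⟩ := exists_polar_mul_pairFactor t a₀ a₁ (hy0 a) (hy2 a)
    refine ⟨b₀, b₁, fun X hX2 hyX => ?_⟩
    have hZX : y a * X ≠ 1 := hyX a (mem_insert_self a s)
    have hsX : ∀ i ∈ s, y i * X ≠ 1 := fun i hi => hyX i (mem_insert_of_mem hi)
    have hne : ∀ i ∈ s, y i ≠ y a := fun i hi => hinj.ne fun h => ha (h ▸ hi)
    have hsZ : ∀ i ∈ s, y i * (y a)⁻¹ ≠ 1 := fun i hi => by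
      rw [Ne, mul_inv_eq_one₀ (hy0 a)]; exact hne i hi
    have hZ2 : (y a)⁻¹ ^ 2 ≠ 1 := by rw [inv_pow, Ne, inv_eq_one]; exact hy2 a
    have hsum : (∑ i ∈ s, residue t y s i / (1 - y i * X)) * pairFactor t (y a) X
        = ∑ i ∈ s, residue t y (insert a s) i / (1 - y i * X)
          + (1 - t) * (∑ i ∈ s, residue t y s i / (1 - y i * (y a)⁻¹)) / (1 - y a * X) := by
      rw [sum_mul, mul_sum, sum_div, ← sum_add_distrib]
      refine sum_congr rfl fun i hi => ?_
      rw [residue_insert_of_mem t y ha hi]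
      exact div_mul_pairFactor t _ (hy0 i) (hy0 a) (hne i hi) (hsX i hi) hZX
    rw [kernel_insert t y ha, H X hX2 hsX, sum_insert ha, card_insert_of_notMem ha,
      residue_insert_self t y ha, H _ hZ2 hsZ]
    linear_combination hpolar X hX2 hZX + hsum + t ^ (#s + 1) * pairFactor_eq_add t hZX

end PartialFractions

def poleSum (y X : F) : F := 1 / (1 - y * X) + 1 / (1 - y * X⁻¹) - 1

theorem poleSum_inv {y X : F} (hy : y ≠ 0) (hX : X ≠ 0) (hyX : y * X ≠ 1) (hne : y ≠ X) :
    poleSum y⁻¹ X = -poleSum y X := by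
  unfold poleSum
  field_simp
  ring

theorem kernel_add_kernel_inv (t X : F) {n : ℕ} (y : Fin n → F)
    (h : IsGeneric (Fin.cons X y : Fin (n + 1) → F)) :
    kernel t y univ X + kernel t y univ X⁻¹
      = t ^ (n + 1) + 1 + ∑ i, residue t y univ i * poleSum (y i) X := by
  have hy : IsGeneric y := by simpa using h.comp_injective (Fin.succ_injective n)
  have hX0 : X ≠ 0 := by simpa using h.ne_zero 0
  have hX2 : X ^ 2 ≠ 1 := by simpa using h.sq_ne_one 0
  have hXi2 : X⁻¹ ^ 2 ≠ 1 := by rw [inv_pow, Ne, inv_eq_one]; exact hX2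
  have hyX (i : Fin n) : y i * X ≠ 1 := by simpa using h.mul_ne_one (Fin.succ_ne_zero i)
  have hyXi (i : Fin n) : y i * X⁻¹ ≠ 1 := by
    rw [Ne, mul_inv_eq_one₀ hX0]; simpa using h.injective.ne (Fin.succ_ne_zero i)
  obtain ⟨a₀, a₁, H⟩ :=
    exists_kernel_eq_partialFraction t y hy.ne_zero hy.sq_ne_one hy.injective univ
  have H0 := H 0 (by simp) (by simp)
  simp only [kernel, pairFactor, mul_zero, sub_zero, div_one, prod_const_one, mul_one, add_zero,
    zero_pow two_ne_zero, card_univ, Fintype.card_fin] at H0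
  simp only [poleSum, mul_sub, mul_add, mul_one_div, mul_one, sum_sub_distrib, sum_add_distrib]
  rw [H X hX2 (fun i _ => hyX i), H X⁻¹ hXi2 (fun i _ => hyXi i), card_univ, Fintype.card_fin]
  linear_combination polar_add_polar_inv a₀ a₁ hX0 hX2 - H0

theorem sum_weight_mul_residue_mul_poleSum (t X : F) {n : ℕ} (x : Fin n → F)
    (hx : IsGeneric (Fin.cons X x : Fin (n + 1) → F)) (i : Fin n) :
    ∑ σ, weight t (sgnVar x σ) * residue t (sgnVar x σ) univ i * poleSum (sgnVar x σ i) X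
      = 0 := by
  cases n with
  | zero => exact i.elim0
  | succ n =>
    have hpole : poleSum (x i)⁻¹ X = -poleSum (x i) X := by
      refine poleSum_inv ?_ ?_ ?_ ?_
      · simpa using hx.ne_zero i.succ
      · simpa using hx.ne_zero 0
      · simpa using hx.mul_ne_one (Fin.succ_ne_zero i)
      · simpa using hx.injective.ne (Fin.succ_ne_zero i)
    rw [sum_sgnVar_insertNth x i fun y => weight t y * residue t y univ i * poleSum (y i) X]
    refine sum_eq_zero fun τ _ => ?_
    simp only [Fin.insertNth_apply_same, weight_insertNth, residue_insertNth_self, inv_inv, hpole]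
    ring

theorem sum_weight_sgnVar (t : F) {n : ℕ} (x : Fin n → F) (hx : IsGeneric x) :
    ∑ σ, weight t (sgnVar x σ) = ∏ i ∈ range n, (t ^ (i + 1) + 1) := by
  induction n with
  | zero => simp [weight]
  | succ n ih =>
    obtain ⟨X, y, rfl⟩ : ∃ X y, x = Fin.cons X y := ⟨x 0, Fin.tail x, (Fin.cons_self_tail x).symm⟩
    have hy : IsGeneric y := by simpa using hx.comp_injective (Fin.succ_injective n)
    calc ∑ σ, weight t (sgnVar (Fin.cons X y) σ)
        = ∑ τ, weight t (sgnVar y τ)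
            * (kernel t (sgnVar y τ) univ X + kernel t (sgnVar y τ) univ X⁻¹) := by
          simp only [sum_sgnVar_cons X y (weight t), weight_cons, mul_add]
      _ = ∑ τ, (weight t (sgnVar y τ) * (t ^ (n + 1) + 1) + ∑ i, weight t (sgnVar y τ)
            * residue t (sgnVar y τ) univ i * poleSum (sgnVar y τ i) X) := by
          refine sum_congr rfl fun τ _ => ?_
          rw [kernel_add_kernel_inv t X _ (isGeneric_cons_sgnVar hx τ), mul_add, mul_sum]
          simp only [mul_assoc]
      _ = (∑ τ, weight t (sgnVar y τ)) * (t ^ (n + 1) + 1) := by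
          rw [sum_add_distrib, sum_comm, sum_eq_zero fun i _ =>
            sum_weight_mul_residue_mul_poleSum t X y hx i, add_zero, sum_mul]
      _ = ∏ i ∈ range (n + 1), (t ^ (i + 1) + 1) := by rw [ih y hy, prod_range_succ]

end MacdonaldCn

/-- The constant-term Macdonald identity for `C_n` (`r = 0` case):
`∑_{σ∈{±1}^n} ∏_i (1-tx_i^{2σ_i})/(1-x_i^{2σ_i})
  ∏_{i<j} (1-tx_i^{σ_i}x_j^{σ_j})/(1-x_i^{σ_i}x_j^{σ_j}) = ∏_{i=1}^n (t^i+1)`. -/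
theorem stmt5 {F : Type*} [Field F] {n : ℕ} (x : Fin n → F) (t : F)
    (hx0 : ∀ i, x i ≠ 0)
    (hx2 : ∀ i, (x i) ^ 2 ≠ 1)
    (hxx : ∀ i j, i ≠ j → x i * x j ≠ 1 ∧ x i ≠ x j) :
    ∑ σ : Fin n → Bool,
      (∏ i, (1 - t * (sgnVar x σ i) ^ 2) / (1 - (sgnVar x σ i) ^ 2)) *
      ∏ i, ∏ j ∈ Finset.Ioi i,
        (1 - t * sgnVar x σ i * sgnVar x σ j) / (1 - sgnVar x σ i * sgnVar x σ j)
      = ∏ i ∈ Finset.range n, (t ^ (i + 1) + 1) := by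
  have hx : MacdonaldCn.IsGeneric x :=
    ⟨hx0, hx2, fun i j hij => (hxx i j hij).1, fun i j h => by_contra fun hij => (hxx i j hij).2 h⟩
  rw [← MacdonaldCn.sum_weight_sgnVar t x hx]
  simp only [MacdonaldCn.weight, MacdonaldCn.pairFactor, sq, mul_assoc]
end

section
/- Let u_1,…,u_r and t be indeterminates. For a subset I ⊆ {1,…,r}, set v_i = u_i if i ∈ I and v_i = 1/(t u_i) otherwise, and define c_I = ∏_{1 ≤ i < j ≤ r} (1 - v_i v_j)/(1 - t v_i v_j). Then ∑_{I ⊆ {1,…,r}} c_I = ∏_{k=0}^{r-1}(t^{-k} + 1). -/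
/-!
Induction on `r`. Fix `v_0 = y ∈ {u_0, 1/(t u_0)}`; the factors of `c_I` involving `v_0` form
`∏_{k ≥ 1} (1 - v_k y)/(1 - t v_k y)`, whose partial fraction expansion in `y` is
`t^{-m} + ∑_k R_k/(1 - t v_k y)` with `m = r - 1`. The constant terms of the two choices of `y`
contribute `2 t^{-m}` times the sum for `u_1, …, u_m`. The product of `R_k` with the weight of
`v_1, …, v_m` does not change when `v_k` is replaced by `1/(t v_k)`, while the four values of
`1/(1 - t v_k y)` so obtained add up to `2`; pairing the subsets that differ only in `k` therefore
replaces each pole term by `R_k`, and `∑_k R_k = 1 - t^{-m}` (take `y = 0`). So the sum gets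
multiplied by `1 + t^{-m}`.
-/

open Finset

namespace HyperoctahedralSum

section Products

variable {ι M α : Type*} [CommMonoid M] [LinearOrder ι] [Fintype ι] [LocallyFiniteOrderTop ι]
  [LocallyFiniteOrderBot ι]

lemma prod_prod_Ioi_ite_eq {G : ι → ι → M} (hG : ∀ i j, G i j = G j i) (k : ι) :
    ∏ i, ∏ j ∈ Ioi i, (if i = k ∨ j = k then G i j else 1) = ∏ i ∈ univ.erase k, G i k := by
  have hrow : ∀ i ∈ univ.erase k, ∏ j ∈ Ioi i, (if i = k ∨ j = k then G i j else 1)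
      = if k ∈ Ioi i then G i k else 1 := by
    intro i hi
    rw [← prod_ite_eq' (Ioi i) k (fun _ => G i k)]
    refine prod_congr rfl fun j _ => ?_
    by_cases h : j = k <;> simp [h, (mem_erase.1 hi).1]
  have hIio : (univ.erase k).filter (fun i => k ∈ Ioi i) = Iio k := by
    ext i
    simpa using fun h : i < k => h.ne
  rw [← mul_prod_erase univ (fun i => ∏ j ∈ Ioi i, _) (mem_univ k), prod_congr rfl hrow,
    ← prod_filter (fun i => k ∈ Ioi i), hIio, ← compl_singleton, ← Ioi_disjUnion_Iio,
    prod_disjUnion]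
  congr 1
  exact prod_congr rfl fun j _ => by simp [hG k j]

lemma prod_prod_Ioi_eq_mul_prod_erase {G : ι → ι → M} (hG : ∀ i j, G i j = G j i) (k : ι) :
    ∏ i, ∏ j ∈ Ioi i, G i j
      = (∏ i, ∏ j ∈ Ioi i, if i = k ∨ j = k then 1 else G i j) * ∏ i ∈ univ.erase k, G i k := by
  rw [← prod_prod_Ioi_ite_eq hG, ← prod_mul_distrib]
  refine prod_congr rfl fun i _ => ?_
  rw [← prod_mul_distrib]
  refine prod_congr rfl fun j _ => ?_
  split_ifs <;> simp

def pairProd (f : α → α → M) (V : ι → α) : M := ∏ i, ∏ j ∈ Ioi i, f (V i) (V j)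

lemma pairProd_update_mul {f : α → α → M} (hf : ∀ a b, f a b = f b a)
    (V : ι → α) (k : ι) (b : α) :
    pairProd f (Function.update V k b) * ∏ i ∈ univ.erase k, f (V i) (V k)
      = pairProd f V * ∏ i ∈ univ.erase k, f (V i) b := by
  rw [pairProd, pairProd, prod_prod_Ioi_eq_mul_prod_erase (fun _ _ => hf _ _) k,
    prod_prod_Ioi_eq_mul_prod_erase (fun _ _ => hf _ _) k]
  have hoff : (∏ i, ∏ j ∈ Ioi i, if i = k ∨ j = k then 1
        else f (Function.update V k b i) (Function.update V k b j))
      = ∏ i, ∏ j ∈ Ioi i, if i = k ∨ j = k then 1 else f (V i) (V j) := by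
    refine prod_congr rfl fun i _ => prod_congr rfl fun j _ => ?_
    split_ifs with h
    · rfl
    · rw [not_or] at h
      rw [Function.update_of_ne h.1, Function.update_of_ne h.2]
  have hcol : ∏ i ∈ univ.erase k, f (Function.update V k b i) (Function.update V k b k)
      = ∏ i ∈ univ.erase k, f (V i) b :=
    prod_congr rfl fun i hi => by
      rw [Function.update_self, Function.update_of_ne (ne_of_mem_erase hi)]
  rw [hoff, hcol, mul_right_comm]

end Products

lemma pairProd_cons {M α : Type*} [CommMonoid M] {m : ℕ} (f : α → α → M) (a : α) (V : Fin m → α) :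
    pairProd f (Fin.cons a V : Fin (m + 1) → α) = (∏ j, f a (V j)) * pairProd f V := by
  simp [pairProd, Fin.prod_univ_succ]

lemma sum_mul_eq_sum_of_involutive {α R : Type*} [Fintype α] [CommRing R] {σ : α → α}
    (hσ : Function.Involutive σ) (hfix : ∀ a, σ a ≠ a) {w φ : α → R}
    (hw : ∀ a, w (σ a) = w a) (hφ : ∀ a, φ a + φ (σ a) = 2) :
    ∑ a, w a * φ a = ∑ a, w a := by
  rw [← sub_eq_zero, ← sum_sub_distrib]
  refine sum_ninvolution σ (fun a => ?_) (fun a _ => hfix a) (fun _ => mem_univ _) hσ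
  rw [hw]
  linear_combination w a * hφ a

lemma sum_finset_eq_sum_bool {α M : Type*} [Fintype α] [DecidableEq α] [AddCommMonoid M]
    (f : (α → Bool) → M) : ∑ I : Finset α, f (fun i => decide (i ∈ I)) = ∑ ε, f ε :=
  Fintype.sum_equiv ⟨fun I i => decide (i ∈ I), fun ε => univ.filter (ε ·), fun I => by ext; simp,
    fun ε => by funext; simp⟩ _ _ fun _ => rfl

variable {F : Type*} [Field F]

def twist (t a : F) : F := (t * a)⁻¹

def pairFactor (t a b : F) : F := (1 - a * b) / (1 - t * a * b)

/-- Makes `1 - t v_i v_j` nonzero for all four choices of `v_i ∈ {a, 1/(t a)}`,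
`v_j ∈ {b, 1/(t b)}`. -/
def Admissible (t a b : F) : Prop := t * a * b ≠ 1 ∧ a ≠ b

section Scalar

variable {t a b x y : F}

lemma twist_twist (ht : t ≠ 0) (a : F) : twist t (twist t a) = a := by
  rw [twist, twist, mul_inv_rev, inv_inv, mul_comm t a, mul_inv_cancel_right₀ ht]

lemma mul_twist (ht : t ≠ 0) (a b : F) : t * a * twist t b = a / b := by
  rw [twist, mul_inv, ← mul_assoc, mul_right_comm t, mul_inv_cancel₀ ht, one_mul, div_eq_mul_inv]

lemma pairFactor_comm (t a b : F) : pairFactor t a b = pairFactor t b a := by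
  rw [pairFactor, pairFactor, mul_comm a b, mul_right_comm t]

lemma pairFactor_eq (ht : t ≠ 0) (h : t * a * y ≠ 1) :
    pairFactor t a y = t⁻¹ + (1 - t⁻¹) * (1 - t * a * y)⁻¹ := by
  have : 1 - t * a * y ≠ 0 := sub_ne_zero.2 h.symm
  rw [pairFactor, eq_comm, ← sub_eq_zero]
  field_simp
  ring

lemma pairFactor_mul_inv_eq (ht : t ≠ 0) (ha : a ≠ 0) (hb : b ≠ 0) (hab : a ≠ b)
    (hay : t * a * y ≠ 1) (hby : t * b * y ≠ 1) :
    pairFactor t a y * (1 - t * b * y)⁻¹ = pairFactor t a (twist t b) * (1 - t * b * y)⁻¹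
      + (1 - t⁻¹) * (1 - t * b * twist t a)⁻¹ * (1 - t * a * y)⁻¹ := by
  have h1 : 1 - t * a * y ≠ 0 := sub_ne_zero.2 hay.symm
  have h2 : 1 - t * b * y ≠ 0 := sub_ne_zero.2 hby.symm
  have h3 : a - b ≠ 0 := sub_ne_zero.2 hab
  have h4 : b - a ≠ 0 := sub_ne_zero.2 hab.symm
  have e1 : pairFactor t a (twist t b) = (a - t * b) / (t * (a - b)) := by
    rw [pairFactor, twist]
    field_simp
    ring
  have e2 : (1 - t⁻¹) * (1 - t * b * twist t a)⁻¹ = (t - 1) * a / (t * (a - b)) := by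
    rw [twist]
    field_simp
  have htab : t * (a - b) ≠ 0 := mul_ne_zero ht h3
  rw [e1, e2, pairFactor]
  simp only [← div_eq_mul_inv, div_div]
  rw [div_add_div _ _ (mul_ne_zero htab h2) (mul_ne_zero htab h1),
    div_eq_div_iff (mul_ne_zero h1 h2) (mul_ne_zero (mul_ne_zero htab h2) (mul_ne_zero htab h1))]
  ring

lemma inv_one_sub_add_inv_one_sub_inv {z : F} (h0 : z ≠ 0) (h1 : z ≠ 1) :
    (1 - z)⁻¹ + (1 - z⁻¹)⁻¹ = 1 := by
  have : 1 - z ≠ 0 := sub_ne_zero.2 h1.symm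
  have e : 1 - z⁻¹ = -((1 - z) / z) := by field_simp; ring
  rw [e, inv_neg, inv_div]
  field_simp
  ring

lemma Admissible.symm {b : F} (h : Admissible t a b) : Admissible t b a :=
  ⟨by rw [mul_right_comm]; exact h.1, h.2.symm⟩

lemma Admissible.twist_left {b : F} (ht : t ≠ 0) (ha : a ≠ 0) (h : Admissible t a b) :
    Admissible t (twist t a) b := by
  refine ⟨?_, fun hab => h.1 ?_⟩
  · rw [mul_right_comm, mul_twist ht, ne_eq, div_eq_one_iff_eq ha]
    exact h.2.symm
  · rw [← hab, twist, mul_inv_cancel₀ (mul_ne_zero ht ha)]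

lemma sum_inv_one_sub_twist_eq_two (ht : t ≠ 0) (ha : a ≠ 0) (hx : x ≠ 0) (h : Admissible t a x) :
    (1 - t * a * x)⁻¹ + (1 - t * a * twist t x)⁻¹
      + ((1 - t * twist t a * x)⁻¹ + (1 - t * twist t a * twist t x)⁻¹) = 2 := by
  have e1 : t * twist t a * twist t x = (t * a * x)⁻¹ := by
    rw [twist, twist]; field_simp
  have e2 : t * twist t a * x = (t * a * twist t x)⁻¹ := by
    rw [mul_right_comm, mul_twist ht, mul_twist ht, inv_div]
  have hz : t * a * twist t x ≠ 1 := by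
    rw [mul_twist ht, ne_eq, div_eq_one_iff_eq hx]; exact h.2
  rw [e1, e2]
  linear_combination inv_one_sub_add_inv_one_sub_inv (by simp [ht, ha, hx]) h.1
    + inv_one_sub_add_inv_one_sub_inv (by simp [mul_twist ht, ha, hx]) hz

end Scalar

section PartialFractions

variable {ι : Type*} [DecidableEq ι]

/-- The coefficient `R_k` of `1/(1 - t V_k y)` in the expansion of `∏_{i ∈ s} pairFactor t (V i) y`:
`1 - t⁻¹` times the other factors at the pole `y = 1/(t V_k)`. -/
def residue (t : F) (V : ι → F) (s : Finset ι) (k : ι) : F :=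
  (1 - t⁻¹) * ∏ i ∈ s.erase k, pairFactor t (V i) (twist t (V k))

theorem prod_pairFactor_eq_partialFraction {t y : F} {V : ι → F} {s : Finset ι} (ht : t ≠ 0)
    (hV0 : ∀ i ∈ s, V i ≠ 0) (hV : Set.InjOn V s) (hy : ∀ i ∈ s, t * V i * y ≠ 1) :
    ∏ i ∈ s, pairFactor t (V i) y
      = (t ^ #s)⁻¹ + ∑ k ∈ s, residue t V s k * (1 - t * V k * y)⁻¹ := by
  induction s using Finset.induction_on generalizing y with
  | empty => simp
  | @insert a s ha ih =>
    have hV0' : ∀ i ∈ s, V i ≠ 0 := fun i hi => hV0 i (mem_insert_of_mem hi)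
    have hV' : Set.InjOn V s := hV.mono (by simp)
    have hVa : ∀ k ∈ s, V k ≠ V a := fun k hk h =>
      ha (hV (mem_insert_of_mem hk) (mem_insert_self a s) h ▸ hk)
    have hpole : ∀ k ∈ s, t * V k * twist t (V a) ≠ 1 := by
      intro k hk h
      rw [mul_twist ht, div_eq_one_iff_eq (hV0 a (mem_insert_self a s))] at h
      exact hVa k hk h
    have hres : ∀ k ∈ s, residue t V (insert a s) k
        = pairFactor t (V a) (twist t (V k)) * residue t V s k := by
      intro k hk
      rw [residue, residue, erase_insert_of_ne (by rintro rfl; exact ha hk),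
        prod_insert (fun h => ha (mem_of_mem_erase h))]
      ring
    have hres_a : residue t V (insert a s) a
        = (1 - t⁻¹)
          * ((t ^ #s)⁻¹ + ∑ k ∈ s, residue t V s k * (1 - t * V k * twist t (V a))⁻¹) := by
      rw [residue, erase_insert ha, ih hV0' hV' hpole]
    have hstep : ∀ k ∈ s, pairFactor t (V a) y * (residue t V s k * (1 - t * V k * y)⁻¹)
        = residue t V (insert a s) k * (1 - t * V k * y)⁻¹
          + (1 - t⁻¹) * (residue t V s k * (1 - t * V k * twist t (V a))⁻¹)
            * (1 - t * V a * y)⁻¹ := by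
      intro k hk
      rw [hres k hk]
      linear_combination residue t V s k * pairFactor_mul_inv_eq ht (hV0 a (mem_insert_self a s))
        (hV0' k hk) (hVa k hk).symm (hy a (mem_insert_self a s)) (hy k (mem_insert_of_mem hk))
    rw [prod_insert ha, ih hV0' hV' fun i hi => hy i (mem_insert_of_mem hi), sum_insert ha,
      card_insert_of_notMem ha, hres_a, mul_add, mul_sum, sum_congr rfl hstep, sum_add_distrib,
      ← sum_mul, ← mul_sum, pairFactor_eq ht (hy a (mem_insert_self a s)), pow_succ, mul_inv]
    ring

lemma sum_residue {ι : Type*} [DecidableEq ι] {t : F} {V : ι → F} {s : Finset ι} (ht : t ≠ 0)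
    (hV0 : ∀ i ∈ s, V i ≠ 0) (hV : Set.InjOn V s) :
    ∑ k ∈ s, residue t V s k = 1 - (t ^ #s)⁻¹ := by
  have h := prod_pairFactor_eq_partialFraction ht hV0 hV (y := 0) (by simp)
  simp only [pairFactor, mul_zero, sub_zero, div_one, inv_one, mul_one, prod_const_one] at h
  linear_combination -h

end PartialFractions

section Specialization

variable {ι : Type*} {t : F}

/-- The `v_i` of the subset `{i | ε i}`. -/
def pickVar (t : F) (u : ι → F) (ε : ι → Bool) (i : ι) : F :=
  if ε i then u i else twist t (u i)

lemma pickVar_ne_zero (ht : t ≠ 0) {u : ι → F} {i : ι} (hu : u i ≠ 0) (ε : ι → Bool) :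
    pickVar t u ε i ≠ 0 := by
  unfold pickVar twist
  split_ifs
  · exact hu
  · exact inv_ne_zero (mul_ne_zero ht hu)

lemma Admissible.pickVar_left (ht : t ≠ 0) {u : ι → F} {i : ι} {b : F} (hu : u i ≠ 0)
    (h : Admissible t (u i) b) (ε : ι → Bool) : Admissible t (pickVar t u ε i) b := by
  unfold pickVar
  split_ifs
  · exact h
  · exact h.twist_left ht hu

lemma pickVar_update_not [DecidableEq ι] (ht : t ≠ 0) (u : ι → F) (ε : ι → Bool) (k : ι) :
    pickVar t u (Function.update ε k (!ε k))
      = Function.update (pickVar t u ε) k (twist t (pickVar t u ε k)) := by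
  funext i
  by_cases hik : i = k
  · subst hik
    cases h : ε i <;> simp [pickVar, h, twist_twist ht]
  · simp [pickVar, Function.update_of_ne hik]

lemma pickVar_cons {m : ℕ} (u : Fin (m + 1) → F) (b : Bool) (ε : Fin m → Bool) :
    pickVar t u (Fin.cons b ε : Fin (m + 1) → Bool)
      = Fin.cons (if b then u 0 else twist t (u 0)) (pickVar t (Fin.tail u) ε) := by
  funext i
  cases i using Fin.cases <;> rfl

lemma pickVar_injective (ht : t ≠ 0) {u : ι → F} (hu0 : ∀ i, u i ≠ 0)
    (hu : Pairwise fun i j => Admissible t (u i) (u j)) (ε : ι → Bool) :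
    Function.Injective (pickVar t u ε) := by
  intro i j hij
  by_contra hne
  exact (((hu hne).pickVar_left ht (hu0 i) ε).symm.pickVar_left ht (hu0 j) ε).2 hij.symm

end Specialization

lemma pairProd_mul_residue_update_twist {m : ℕ} {t : F} (ht : t ≠ 0) (V : Fin m → F)
    (k : Fin m) :
    pairProd (pairFactor t) (Function.update V k (twist t (V k)))
        * residue t (Function.update V k (twist t (V k))) univ k
      = pairProd (pairFactor t) V * residue t V univ k := by
  have h : residue t (Function.update V k (twist t (V k))) univ k
      = (1 - t⁻¹) * ∏ i ∈ univ.erase k, pairFactor t (V i) (V k) := by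
    rw [residue, Function.update_self, twist_twist ht]
    congr 1
    exact prod_congr rfl fun i hi => by rw [Function.update_of_ne (ne_of_mem_erase hi)]
  rw [h, residue, mul_left_comm, pairProd_update_mul (pairFactor_comm t), mul_left_comm]

section Recursion

variable {m : ℕ} {t : F}

def weight (t : F) (u : Fin m → F) (ε : Fin m → Bool) : F := pairProd (pairFactor t) (pickVar t u ε)

def weightSum (t : F) (u : Fin m → F) : F := ∑ ε, weight t u ε

lemma weightSum_succ_eq_sum (t : F) (u : Fin (m + 1) → F) :
    weightSum t u = ∑ ε, weight t (Fin.tail u) ε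
      * (∏ i, pairFactor t (pickVar t (Fin.tail u) ε i) (u 0)
        + ∏ i, pairFactor t (pickVar t (Fin.tail u) ε i) (twist t (u 0))) := by
  rw [weightSum, ← (Fin.consEquiv _).sum_comp, Fintype.sum_prod_type, Fintype.sum_bool,
    ← sum_add_distrib]
  refine sum_congr rfl fun ε _ => ?_
  simp only [weight, Fin.consEquiv, Equiv.coe_fn_mk, pickVar_cons, pairProd_cons, if_true,
    Bool.false_eq_true, if_false, pairFactor_comm t (u 0), pairFactor_comm t (twist t (u 0))]
  ring

lemma sum_weight_mul_residue_mul_poles {x : F} {u : Fin m → F} (ht : t ≠ 0) (hx : x ≠ 0)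
    (hu0 : ∀ i, u i ≠ 0) (hux : ∀ i, Admissible t (u i) x) (k : Fin m) :
    ∑ ε, weight t u ε * residue t (pickVar t u ε) univ k
        * ((1 - t * pickVar t u ε k * x)⁻¹ + (1 - t * pickVar t u ε k * twist t x)⁻¹)
      = ∑ ε, weight t u ε * residue t (pickVar t u ε) univ k := by
  refine sum_mul_eq_sum_of_involutive (σ := fun ε => Function.update ε k (!ε k))
    (fun ε => by simp) (fun ε h => by simpa using congrFun h k) (fun ε => ?_) (fun ε => ?_)
  · simp only [weight, pickVar_update_not ht]
    exact pairProd_mul_residue_update_twist ht _ k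
  · simp only [pickVar_update_not ht, Function.update_self]
    exact sum_inv_one_sub_twist_eq_two ht (pickVar_ne_zero ht (hu0 k) ε) hx
      ((hux k).pickVar_left ht (hu0 k) ε)

theorem sum_weight_mul_add_eq {x : F} {u : Fin m → F} (ht : t ≠ 0) (hx : x ≠ 0)
    (hu0 : ∀ i, u i ≠ 0) (hu : Pairwise fun i j => Admissible t (u i) (u j))
    (hux : ∀ i, Admissible t (u i) x) :
    ∑ ε, weight t u ε * (∏ i, pairFactor t (pickVar t u ε i) x
        + ∏ i, pairFactor t (pickVar t u ε i) (twist t x))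
      = (1 + (t ^ m)⁻¹) * weightSum t u := by
  have hV0 (ε : Fin m → Bool) (i : Fin m) : pickVar t u ε i ≠ 0 := pickVar_ne_zero ht (hu0 i) ε
  have hVinj (ε : Fin m → Bool) : Set.InjOn (pickVar t u ε) (univ : Finset (Fin m)) :=
    (pickVar_injective ht hu0 hu ε).injOn
  have hVx (ε : Fin m → Bool) (k : Fin m) : Admissible t (pickVar t u ε k) x :=
    (hux k).pickVar_left ht (hu0 k) ε
  have hpoles (ε : Fin m → Bool) :
      ∏ i, pairFactor t (pickVar t u ε i) x + ∏ i, pairFactor t (pickVar t u ε i) (twist t x)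
        = 2 * (t ^ m)⁻¹ + ∑ k, residue t (pickVar t u ε) univ k
          * ((1 - t * pickVar t u ε k * x)⁻¹ + (1 - t * pickVar t u ε k * twist t x)⁻¹) := by
    rw [prod_pairFactor_eq_partialFraction ht (fun i _ => hV0 ε i) (hVinj ε)
        fun k _ => (hVx ε k).1,
      prod_pairFactor_eq_partialFraction ht (fun i _ => hV0 ε i) (hVinj ε)
        fun k _ => by rw [mul_twist ht, ne_eq, div_eq_one_iff_eq hx]; exact (hVx ε k).2]
    simp only [card_univ, Fintype.card_fin, mul_add, sum_add_distrib]
    ring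
  calc _ = 2 * (t ^ m)⁻¹ * weightSum t u + ∑ k, ∑ ε, weight t u ε
          * residue t (pickVar t u ε) univ k
          * ((1 - t * pickVar t u ε k * x)⁻¹ + (1 - t * pickVar t u ε k * twist t x)⁻¹) := by
        simp only [hpoles, mul_add (weight t u _), sum_add_distrib, mul_sum, weightSum]
        rw [sum_comm]
        congr 1
        · exact sum_congr rfl fun ε _ => by ring
        · exact sum_congr rfl fun k _ => sum_congr rfl fun ε _ => by ring
    _ = 2 * (t ^ m)⁻¹ * weightSum t u
          + ∑ ε, weight t u ε * ∑ k, residue t (pickVar t u ε) univ k := by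
        rw [sum_congr rfl fun k _ => sum_weight_mul_residue_mul_poles ht hx hu0 hux k, sum_comm]
        simp only [mul_sum]
    _ = (1 + (t ^ m)⁻¹) * weightSum t u := by
        simp only [sum_residue ht (fun i _ => hV0 _ i) (hVinj _), card_univ, Fintype.card_fin]
        rw [weightSum, ← sum_mul]
        ring

theorem weightSum_succ {u : Fin (m + 1) → F} (ht : t ≠ 0) (hu0 : ∀ i, u i ≠ 0)
    (hu : Pairwise fun i j => Admissible t (u i) (u j)) :
    weightSum t u = (1 + (t ^ m)⁻¹) * weightSum t (Fin.tail u) := by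
  rw [weightSum_succ_eq_sum]
  exact sum_weight_mul_add_eq ht (hu0 0) (fun i => hu0 i.succ)
    (hu.comp_of_injective (Fin.succ_injective m)) fun i => hu (Fin.succ_ne_zero i)

theorem weightSum_eq (ht : t ≠ 0) {u : Fin m → F} (hu0 : ∀ i, u i ≠ 0)
    (hu : Pairwise fun i j => Admissible t (u i) (u j)) :
    weightSum t u = ∏ k ∈ range m, ((t ^ k)⁻¹ + 1) := by
  induction m with
  | zero => simp [weightSum, weight, pairProd]
  | succ m ih =>
    rw [weightSum_succ ht hu0 hu, ih (u := Fin.tail u) (fun i => hu0 i.succ)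
      (hu.comp_of_injective (Fin.succ_injective m)), prod_range_succ]
    ring

end Recursion

end HyperoctahedralSum

/-- The `n = 0` case of the main rational identity:
`∑_{I⊆{1,…,r}} ∏_{i<j} (1-v_iv_j)/(1-tv_iv_j) = ∏_{k=0}^{r-1}(t^{-k}+1)`,
where `v_i = u_i` if `i ∈ I` and `v_i = 1/(tu_i)` otherwise. -/
theorem stmt6 {F : Type*} [Field F] {r : ℕ} (u : Fin r → F) (t : F)
    (ht : t ≠ 0) (hu0 : ∀ i, u i ≠ 0)
    (hne : ∀ i j, i ≠ j → t * u i * u j ≠ 1 ∧ u i ≠ u j) :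
    ∑ I : Finset (Fin r),
      (∏ i, ∏ j ∈ Finset.Ioi i,
        (1 - (if i ∈ I then u i else (t * u i)⁻¹) * (if j ∈ I then u j else (t * u j)⁻¹)) /
        (1 - t * (if i ∈ I then u i else (t * u i)⁻¹) * (if j ∈ I then u j else (t * u j)⁻¹)))
      = ∏ k ∈ Finset.range r, ((t ^ k)⁻¹ + 1) := by
  open HyperoctahedralSum in
  calc _ = ∑ I : Finset (Fin r), weight t u fun i => decide (i ∈ I) := by
        simp [weight, pairProd, pairFactor, pickVar, twist]
    _ = weightSum t u := sum_finset_eq_sum_bool (weight t u)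
    _ = _ := weightSum_eq ht hu0 hne
end
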